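/- Every half-isomorphism φ : G → G' of groups is a semi-isomorphism; that is, φ(1) = 1 and φ(xyx) = φ(x)φ(y)φ(x) for all x, y ∈ G. -/

import Mathlib

/-!
Put `a = φ x`, `b = φ y`, `c = φ (x * y)` and `e = φ (x * y * x)`. Half-multiplicativity gives
`c ∈ {a b, b a}` and `e ∈ {c a, a c}`, and, applied to `(x * y) * (x * y)` both ways,
`c * c = φ (x * y * x * y) ∈ {e b, b e}`. Of the four choices of `c` and `e`, two give
`e = a b a` outright; in the other two the last relation forces `a` and `b` to commute,
and then `e = a b a` again.
-/

def IsHalfHom {G G' : Type*} [Mul G] [Mul G'] (φ : G → G') : Prop :=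
  ∀ x y : G, φ (x * y) = φ x * φ y ∨ φ (x * y) = φ y * φ x

theorem eq_mul_mul_of_mul_or_mul {H : Type*} [Group H] {a b c e : H}
    (hc : c = a * b ∨ c = b * a) (he : e = c * a ∨ e = a * c)
    (hcc : c * c = e * b ∨ c * c = b * e) : e = a * b * a := by
  rcases hc with rfl | rfl <;> rcases he with rfl | rfl
  · rfl
  · have hab : b * a = a * b := by
      rcases hcc with h | h
      · exact mul_left_cancel (a := a) <| mul_right_cancel (b := b) <| by
          simpa only [mul_assoc] using h
      · exact (mul_right_cancel (b := a * b) <| by simpa only [mul_assoc] using h).symm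
    rw [mul_assoc, ← hab]
  · have hab : b * a = a * b := by
      rcases hcc with h | h
      · exact mul_left_cancel (a := b * a) <| by simpa only [mul_assoc] using h
      · exact (mul_left_cancel (a := b) <| mul_right_cancel (b := a) <| by
          simpa only [mul_assoc] using h).symm
    rw [hab]
  · exact (mul_assoc a b a).symm

namespace IsHalfHom

variable {G G' : Type*} [Group G] [Group G'] {φ : G → G'}

theorem map_one (hφ : IsHalfHom φ) : φ 1 = 1 := by
  have h : φ 1 = φ 1 * φ 1 := by simpa using hφ 1 1
  simpa using h

theorem map_mul_self (hφ : IsHalfHom φ) (x : G) : φ (x * x) = φ x * φ x :=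
  (hφ x x).elim id id

theorem map_mul_mul_self (hφ : IsHalfHom φ) (x y : G) :
    φ (x * y * x) = φ x * φ y * φ x := by
  refine eq_mul_mul_of_mul_or_mul (hφ x y) (hφ (x * y) x) ?_
  rw [← hφ.map_mul_self, show x * y * (x * y) = x * y * x * y by group]
  exact hφ (x * y * x) y

end IsHalfHom

theorem stmt_7_general {G G' : Type*} [Group G] [Group G'] (φ : G → G')
    (hhalf : ∀ x y : G, φ (x * y) = φ x * φ y ∨ φ (x * y) = φ y * φ x) :
    φ 1 = 1 ∧ ∀ x y : G, φ (x * y * x) = φ x * φ y * φ x :=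
  ⟨IsHalfHom.map_one hhalf, IsHalfHom.map_mul_mul_self hhalf⟩

theorem stmt_7 {G G' : Type*} [Group G] [Group G'] (φ : G → G')
    (hbij : Function.Bijective φ)
    (hhalf : ∀ x y : G, φ (x * y) = φ x * φ y ∨ φ (x * y) = φ y * φ x) :
    φ 1 = 1 ∧ ∀ x y : G, φ (x * y * x) = φ x * φ y * φ x :=
  stmt_7_general φ hhalf
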